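/- arXiv:2205.11233 — 2 statements merged into one kernel-verified Lean document; each statement's English description precedes it below -/
import Mathlib

section
/- Let n ∈ ℕ, c > 0, and let u, v ∈ ℝⁿ satisfy c‖u‖² < 1 and c‖v‖² < 1. Then the rescaled Poincaré distance dominates the Euclidean distance between the images under the logarithmic map at the origin: ‖log₀(u) − log₀(v)‖ ≤ d(u, v) = (1/√c)·artanh(√c·‖(−u) ⊕_c v‖). -/
/-!
Put `x = √c • log₀ u` and `y = √c • log₀ v`. Reading `√c u` as a point of the Klein model,
`‖x‖ = artanh (√c‖u‖)` is its hyperbolic distance from the origin, with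
`cosh ‖x‖ = (1 - c‖u‖²)^(-1/2)` and `sinh ‖x‖ • x / ‖x‖ = √c (1 - c‖u‖²)^(-1/2) • u`.
Since the exponential map of hyperbolic space does not decrease distances,
`cosh ‖x - y‖ ≤ (1 - c⟪u, v⟫) / √((1 - c‖u‖²)(1 - c‖v‖²))`. The Möbius identity
`1 - c‖(-u) ⊕ v‖² = (1 - c‖u‖²)(1 - c‖v‖²) / D` and the Cauchy–Schwarz bound
`(1 - c⟪u, v⟫)² ≤ D` for the Möbius denominator `D` bound the right side by
`cosh (artanh (√c‖(-u) ⊕ v‖))`.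
-/

open Real
open scoped Classical

/-- Real inverse hyperbolic tangent. -/
noncomputable def artanh (x : ℝ) : ℝ := (1 / 2) * Real.log ((1 + x) / (1 - x))

/-- Möbius addition on the Poincaré ball of curvature `c`. -/
noncomputable def mobiusAdd {n : ℕ} (c : ℝ) (u v : EuclideanSpace ℝ (Fin n)) :
    EuclideanSpace ℝ (Fin n) :=
  (1 + 2 * c * (inner ℝ u v : ℝ) + c ^ 2 * ‖u‖ ^ 2 * ‖v‖ ^ 2)⁻¹ •
    ((1 + 2 * c * (inner ℝ u v : ℝ) + c * ‖v‖ ^ 2) • u + (1 - c * ‖u‖ ^ 2) • v)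

/-- Logarithmic map at the origin of the Poincaré ball of curvature `c`. -/
noncomputable def plog {n : ℕ} (c : ℝ) (v : EuclideanSpace ℝ (Fin n)) :
    EuclideanSpace ℝ (Fin n) :=
  if v = 0 then 0 else (_root_.artanh (Real.sqrt c * ‖v‖) / (Real.sqrt c * ‖v‖)) • v

/-- Exponential map at the origin of the Poincaré ball of curvature `c`. -/
noncomputable def pexp {n : ℕ} (c : ℝ) (x : EuclideanSpace ℝ (Fin n)) :
    EuclideanSpace ℝ (Fin n) :=
  if x = 0 then 0 else (Real.tanh (Real.sqrt c * ‖x‖) / (Real.sqrt c * ‖x‖)) • x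

/-- The (rescaled) Poincaré distance of curvature `c`. -/
noncomputable def pdist {n : ℕ} (c : ℝ) (u v : EuclideanSpace ℝ (Fin n)) : ℝ :=
  (1 / Real.sqrt c) * _root_.artanh (Real.sqrt c * ‖mobiusAdd c (-u) v‖)

theorem convexOn_sinh_Ici : ConvexOn ℝ (Set.Ici 0) sinh := by
  refine MonotoneOn.convexOn_of_deriv (convex_Ici 0) continuous_sinh.continuousOn
    differentiable_sinh.differentiableOn ?_
  rw [Real.deriv_sinh, interior_Ici]
  intro x hx y hy hxy
  exact cosh_le_cosh.2 (by rwa [abs_of_pos hx, abs_of_pos hy])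

theorem sinh_le_mul_sinh_div {a b : ℝ} (ha : 0 ≤ a) (hab : a ≤ b) :
    sinh a ≤ a * (sinh b / b) := by
  rcases ha.eq_or_lt with rfl | ha
  · simp
  have := convexOn_sinh_Ici.slope_mono (Set.mem_Ici.2 le_rfl) (a := a) (b := b) ⟨ha.le, ha.ne'⟩
    ⟨ha.le.trans hab, (ha.trans_le hab).ne'⟩ hab
  simp only [slope_def_field, sub_zero, sinh_zero] at this
  rwa [div_le_iff₀ ha, mul_comm] at this

/- With `2A = e + (s - r)` and `2B = e - (s - r)` one has `cosh e - cosh (s - r) = 2 sinh A sinh B`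
and `2AB = sr - p`; since `A ≤ s`, `B ≤ r` and `sinh t / t` increases, `sinh A sinh B` is at most
`AB (sinh s / s) (sinh r / r)`. -/
theorem cosh_le_cosh_mul_cosh_sub {s r p e : ℝ} (hs : 0 ≤ s) (hr : 0 ≤ r) (hp : |p| ≤ s * r)
    (he : 0 ≤ e) (h : e ^ 2 = s ^ 2 + r ^ 2 - 2 * p) :
    cosh e ≤ cosh s * cosh r - sinh s / s * (sinh r / r) * p := by
  wlog hrs : r ≤ s generalizing s r
  · have := this hr hs (by rwa [mul_comm]) (by rw [h]; ring) (le_of_not_ge hrs)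
    linarith
  obtain ⟨hp₁, hp₂⟩ := abs_le.1 hp
  set A := (e + (s - r)) / 2 with hA_def
  set B := (e - (s - r)) / 2 with hB_def
  have hsr_le : s - r ≤ e := abs_le_of_sq_le_sq' (by nlinarith) he |>.2
  have he_le : e ≤ s + r := abs_le_of_sq_le_sq' (by nlinarith) (by linarith) |>.2
  have hA : 0 ≤ A := by linarith
  have hB : 0 ≤ B := by linarith
  have hAB : 2 * (A * B) = s * r - p := by rw [hA_def, hB_def]; linear_combination h / 2
  have hcosh : cosh e = cosh (s - r) + 2 * (sinh A * sinh B) := by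
    rw [show e = A + B by ring, show s - r = A - B by ring, cosh_add, cosh_sub]; ring
  have hsinh : sinh A * sinh B ≤ A * (sinh s / s) * (B * (sinh r / r)) :=
    mul_le_mul (sinh_le_mul_sinh_div hA (by linarith)) (sinh_le_mul_sinh_div hB (by linarith))
      (sinh_nonneg_iff.2 hB) (mul_nonneg hA (div_nonneg (sinh_nonneg_iff.2 hs) hs))
  have hs' : s * (sinh s / s) = sinh s := mul_div_cancel_of_imp' fun h ↦ by simp [h]
  have hr' : r * (sinh r / r) = sinh r := mul_div_cancel_of_imp' fun h ↦ by simp [h]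
  calc cosh e ≤ cosh (s - r) + 2 * (A * B) * (sinh s / s * (sinh r / r)) := by
        rw [hcosh]; linarith
    _ = cosh s * cosh r - sinh s / s * (sinh r / r) * p := by
        rw [hAB, cosh_sub]; linear_combination (r * (sinh r / r)) * hs' + sinh s * hr'

/- The right side is `cosh` of the distance between `exp x` and `exp y` in hyperbolic space of
curvature `-1`. -/
theorem cosh_norm_sub_le {E : Type*} [NormedAddCommGroup E] [InnerProductSpace ℝ E] (x y : E) :
    cosh ‖x - y‖ ≤
      cosh ‖x‖ * cosh ‖y‖ - inner ℝ ((sinh ‖x‖ / ‖x‖) • x) ((sinh ‖y‖ / ‖y‖) • y) := by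
  rw [real_inner_smul_left, real_inner_smul_right, ← mul_assoc]
  exact cosh_le_cosh_mul_cosh_sub (norm_nonneg x) (norm_nonneg y) (abs_real_inner_le_norm x y)
    (norm_nonneg _) (norm_sub_sq_real x y |>.trans (by ring))

theorem artanh_eq_real_artanh {x : ℝ} (hx : x ∈ Set.Icc (-1) 1) :
    _root_.artanh x = Real.artanh x :=
  (Real.artanh_eq_half_log hx).symm

section PoincareBall

variable {n : ℕ} {c : ℝ} {u v : EuclideanSpace ℝ (Fin n)}

theorem sqrt_mul_norm_mem_Ico (hc : 0 ≤ c) (hu : c * ‖u‖ ^ 2 < 1) :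
    √c * ‖u‖ ∈ Set.Ico 0 1 :=
  ⟨by positivity,
    (pow_lt_one_iff_of_nonneg (by positivity) two_ne_zero).1 (by rwa [mul_pow, sq_sqrt hc])⟩

theorem sqrt_smul_plog (hc : 0 < c) (hu : c * ‖u‖ ^ 2 < 1) :
    √c • plog c u = (Real.artanh (√c * ‖u‖) / ‖u‖) • u := by
  obtain ⟨h₀, h₁⟩ := sqrt_mul_norm_mem_Ico hc.le hu
  rw [plog]
  split_ifs with hu₀
  · simp [hu₀]
  rw [smul_smul, artanh_eq_real_artanh ⟨by linarith, h₁.le⟩]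
  have : ‖u‖ ≠ 0 := norm_ne_zero_iff.2 hu₀
  have : √c ≠ 0 := (sqrt_pos.2 hc).ne'
  field_simp

theorem norm_sqrt_smul_plog (hc : 0 < c) (hu : c * ‖u‖ ^ 2 < 1) :
    ‖√c • plog c u‖ = Real.artanh (√c * ‖u‖) := by
  rw [sqrt_smul_plog hc hu, norm_smul, norm_div, Real.norm_eq_abs, norm_norm,
    abs_of_nonneg (Real.artanh_nonneg (by positivity))]
  exact div_mul_cancel_of_imp fun h ↦ by simp [h]

theorem cosh_norm_sqrt_smul_plog (hc : 0 < c) (hu : c * ‖u‖ ^ 2 < 1) :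
    cosh ‖√c • plog c u‖ = 1 / √(1 - c * ‖u‖ ^ 2) := by
  obtain ⟨h₀, h₁⟩ := sqrt_mul_norm_mem_Ico hc.le hu
  rw [norm_sqrt_smul_plog hc hu, Real.cosh_artanh ⟨by linarith, h₁⟩, mul_pow, sq_sqrt hc.le]

theorem sinh_norm_div_smul_sqrt_smul_plog (hc : 0 < c) (hu : c * ‖u‖ ^ 2 < 1) :
    (sinh ‖√c • plog c u‖ / ‖√c • plog c u‖) • (√c • plog c u) =
      (√c / √(1 - c * ‖u‖ ^ 2)) • u := by
  obtain ⟨h₀, h₁⟩ := sqrt_mul_norm_mem_Ico hc.le hu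
  rcases eq_or_ne u 0 with rfl | hu₀
  · simp [plog]
  have hpos : 0 < √c * ‖u‖ := by positivity
  rw [norm_sqrt_smul_plog hc hu, sqrt_smul_plog hc hu, smul_smul,
    Real.sinh_artanh ⟨by linarith, h₁⟩, mul_pow, sq_sqrt hc.le]
  have : Real.artanh (√c * ‖u‖) ≠ 0 := (Real.artanh_pos ⟨hpos, h₁⟩).ne'
  have : ‖u‖ ≠ 0 := norm_ne_zero_iff.2 hu₀
  congr 1
  field_simp

theorem cosh_norm_sub_sqrt_smul_plog_le (hc : 0 < c) (hu : c * ‖u‖ ^ 2 < 1)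
    (hv : c * ‖v‖ ^ 2 < 1) :
    cosh ‖√c • plog c u - √c • plog c v‖ ≤
      (1 - c * inner ℝ u v) / (√(1 - c * ‖u‖ ^ 2) * √(1 - c * ‖v‖ ^ 2)) := by
  refine (cosh_norm_sub_le _ _).trans_eq ?_
  rw [cosh_norm_sqrt_smul_plog hc hu, cosh_norm_sqrt_smul_plog hc hv,
    sinh_norm_div_smul_sqrt_smul_plog hc hu, sinh_norm_div_smul_sqrt_smul_plog hc hv,
    real_inner_smul_left, real_inner_smul_right]
  have : 0 < √(1 - c * ‖u‖ ^ 2) := sqrt_pos.2 (by linarith)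
  have : 0 < √(1 - c * ‖v‖ ^ 2) := sqrt_pos.2 (by linarith)
  field_simp
  rw [sq_sqrt hc.le]

noncomputable def mobiusDenom (c : ℝ) (u v : EuclideanSpace ℝ (Fin n)) : ℝ :=
  1 + 2 * c * inner ℝ u v + c ^ 2 * ‖u‖ ^ 2 * ‖v‖ ^ 2

theorem sq_one_add_mul_inner_le_mobiusDenom (c : ℝ) (u v : EuclideanSpace ℝ (Fin n)) :
    (1 + c * inner ℝ u v) ^ 2 ≤ mobiusDenom c u v := by
  have hcs : inner ℝ u v ^ 2 ≤ ‖u‖ ^ 2 * ‖v‖ ^ 2 := by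
    rw [← mul_pow, ← sq_abs]
    exact pow_le_pow_left₀ (abs_nonneg _) (abs_real_inner_le_norm u v) 2
  unfold mobiusDenom
  nlinarith [sq_nonneg c]

theorem one_add_mul_inner_pos (hc : 0 ≤ c) (hu : c * ‖u‖ ^ 2 < 1) (hv : c * ‖v‖ ^ 2 < 1) :
    0 < 1 + c * inner ℝ u v := by
  have : -inner ℝ u v ≤ ‖u‖ * ‖v‖ := (neg_le_abs _).trans (abs_real_inner_le_norm u v)
  nlinarith [sq_nonneg (‖u‖ - ‖v‖)]

theorem mobiusDenom_pos (hc : 0 ≤ c) (hu : c * ‖u‖ ^ 2 < 1) (hv : c * ‖v‖ ^ 2 < 1) :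
    0 < mobiusDenom c u v :=
  (pow_pos (one_add_mul_inner_pos hc hu hv) 2).trans_le (sq_one_add_mul_inner_le_mobiusDenom c u v)

theorem one_sub_mul_inner_le_sqrt_mobiusDenom_neg (c : ℝ) (u v : EuclideanSpace ℝ (Fin n)) :
    1 - c * inner ℝ u v ≤ √(mobiusDenom c (-u) v) := by
  refine (le_abs_self _).trans (abs_le_sqrt ?_)
  simpa only [inner_neg_left, mul_neg, ← sub_eq_add_neg] using
    sq_one_add_mul_inner_le_mobiusDenom c (-u) v

theorem norm_mobiusAdd_sq_mul_mobiusDenom (h : mobiusDenom c u v ≠ 0) :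
    ‖mobiusAdd c u v‖ ^ 2 * mobiusDenom c u v = ‖u + v‖ ^ 2 := by
  have hnum : ‖(1 + 2 * c * inner ℝ u v + c * ‖v‖ ^ 2) • u + (1 - c * ‖u‖ ^ 2) • v‖ ^ 2 =
      mobiusDenom c u v * ‖u + v‖ ^ 2 := by
    rw [norm_add_sq_real, norm_add_sq_real, norm_smul, norm_smul, real_inner_smul_left,
      real_inner_smul_right, Real.norm_eq_abs, Real.norm_eq_abs, mul_pow, mul_pow, sq_abs, sq_abs,
      mobiusDenom]
    ring
  rw [mobiusAdd, ← mobiusDenom, norm_smul, mul_pow, hnum, norm_inv, Real.norm_eq_abs, inv_pow,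
    sq_abs]
  field_simp

theorem one_sub_mul_norm_mobiusAdd_sq (hc : 0 ≤ c) (hu : c * ‖u‖ ^ 2 < 1)
    (hv : c * ‖v‖ ^ 2 < 1) :
    1 - c * ‖mobiusAdd c u v‖ ^ 2 =
      (1 - c * ‖u‖ ^ 2) * (1 - c * ‖v‖ ^ 2) / mobiusDenom c u v := by
  have hD := mobiusDenom_pos hc hu hv
  have h := norm_mobiusAdd_sq_mul_mobiusDenom hD.ne'
  rw [eq_div_iff hD.ne', sub_mul, mul_assoc, h, norm_add_sq_real, mobiusDenom]
  ring

theorem mul_norm_mobiusAdd_sq_lt_one (hc : 0 ≤ c) (hu : c * ‖u‖ ^ 2 < 1)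
    (hv : c * ‖v‖ ^ 2 < 1) :
    c * ‖mobiusAdd c u v‖ ^ 2 < 1 := by
  have h := one_sub_mul_norm_mobiusAdd_sq hc hu hv
  have : 0 < (1 - c * ‖u‖ ^ 2) * (1 - c * ‖v‖ ^ 2) / mobiusDenom c u v :=
    div_pos (mul_pos (by linarith) (by linarith)) (mobiusDenom_pos hc hu hv)
  linarith

theorem sqrt_mul_pdist (hc : 0 < c) (hu : c * ‖u‖ ^ 2 < 1) (hv : c * ‖v‖ ^ 2 < 1) :
    √c * pdist c u v = Real.artanh (√c * ‖mobiusAdd c (-u) v‖) := by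
  have hm := mul_norm_mobiusAdd_sq_lt_one (u := -u) hc.le (by rwa [norm_neg]) hv
  obtain ⟨h₀, h₁⟩ := sqrt_mul_norm_mem_Ico hc.le hm
  rw [pdist, artanh_eq_real_artanh ⟨by linarith, h₁.le⟩, ← mul_assoc,
    mul_one_div_cancel (sqrt_pos.2 hc).ne', one_mul]

theorem cosh_sqrt_mul_pdist (hc : 0 < c) (hu : c * ‖u‖ ^ 2 < 1) (hv : c * ‖v‖ ^ 2 < 1) :
    cosh (√c * pdist c u v) =
      √(mobiusDenom c (-u) v) / (√(1 - c * ‖u‖ ^ 2) * √(1 - c * ‖v‖ ^ 2)) := by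
  have hu' : c * ‖-u‖ ^ 2 < 1 := by rwa [norm_neg]
  obtain ⟨h₀, h₁⟩ := sqrt_mul_norm_mem_Ico hc.le (mul_norm_mobiusAdd_sq_lt_one hc.le hu' hv)
  have hD := mobiusDenom_pos hc.le hu' hv
  rw [sqrt_mul_pdist hc hu hv, Real.cosh_artanh ⟨by linarith, h₁⟩, mul_pow, sq_sqrt hc.le,
    one_sub_mul_norm_mobiusAdd_sq hc.le hu' hv, norm_neg, sqrt_div' _ hD.le,
    sqrt_mul (by linarith)]
  have : 0 < √(1 - c * ‖u‖ ^ 2) := sqrt_pos.2 (by linarith)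
  have : 0 < √(1 - c * ‖v‖ ^ 2) := sqrt_pos.2 (by linarith)
  have : 0 < √(mobiusDenom c (-u) v) := sqrt_pos.2 hD
  field_simp

theorem pdist_nonneg (hc : 0 < c) (hu : c * ‖u‖ ^ 2 < 1) (hv : c * ‖v‖ ^ 2 < 1) :
    0 ≤ pdist c u v := by
  refine nonneg_of_mul_nonneg_right ?_ (sqrt_pos.2 hc)
  rw [sqrt_mul_pdist hc hu hv]
  exact Real.artanh_nonneg (by positivity)

end PoincareBall

/-- The rescaled Poincaré distance dominates the Euclidean distance between the
images under the logarithmic map at the origin. -/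
theorem norm_sub_plog_le_pdist {n : ℕ} (c : ℝ) (hc : 0 < c)
    (u v : EuclideanSpace ℝ (Fin n))
    (hu : c * ‖u‖ ^ 2 < 1) (hv : c * ‖v‖ ^ 2 < 1) :
    ‖plog c u - plog c v‖ ≤ pdist c u v ∧
      pdist c u v = (1 / Real.sqrt c) * _root_.artanh (Real.sqrt c * ‖mobiusAdd c (-u) v‖) := by
  refine ⟨?_, rfl⟩
  have hcosh : cosh (√c * ‖plog c u - plog c v‖) ≤ cosh (√c * pdist c u v) := calc
    _ = cosh ‖√c • plog c u - √c • plog c v‖ := by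
      rw [← smul_sub, norm_smul, Real.norm_of_nonneg (sqrt_nonneg c)]
    _ ≤ (1 - c * inner ℝ u v) / (√(1 - c * ‖u‖ ^ 2) * √(1 - c * ‖v‖ ^ 2)) :=
      cosh_norm_sub_sqrt_smul_plog_le hc hu hv
    _ ≤ √(mobiusDenom c (-u) v) / (√(1 - c * ‖u‖ ^ 2) * √(1 - c * ‖v‖ ^ 2)) := by
      gcongr
      exact one_sub_mul_inner_le_sqrt_mobiusDenom_neg c u v
    _ = cosh (√c * pdist c u v) := (cosh_sqrt_mul_pdist hc hu hv).symm
  rw [cosh_le_cosh, abs_of_nonneg (by positivity),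
    abs_of_nonneg (mul_nonneg (sqrt_nonneg c) (pdist_nonneg hc hu hv))] at hcosh
  exact le_of_mul_le_mul_left hcosh (sqrt_pos.2 hc)
end

section
/- Let n ∈ ℕ, c > 0, and let a, b ∈ ℝⁿ be unit vectors. Define the hyperbolic inner product D(u,v) = ½·(d(0,u)² + d(0,v)² − d(u,v)²), where d is the rescaled Poincaré distance. Then D(r·a, r·b)/r² tends to ⟨a,b⟩ as r tends to 0 from the right; that is, near the origin of the Poincaré ball the proposed hyperbolic inner product agrees with the Euclidean inner product to leading order. -/
open Real
open scoped Classical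

/-- The hyperbolic inner product `D(u,v) = ½(d(0,u)² + d(0,v)² − d(u,v)²)`. -/
noncomputable def phyperInner {n : ℕ} (c : ℝ) (u v : EuclideanSpace ℝ (Fin n)) : ℝ :=
  (1 / 2) * (pdist c 0 u ^ 2 + pdist c 0 v ^ 2 - pdist c u v ^ 2)

/-!
The distance from the origin is `artanh (√c ‖v‖) / √c` and `artanh x = x + o(x)`, so
`d(0, w r) / r → ‖L‖` whenever `w r / r → L` as `r → 0⁺`. Möbius addition agrees with ordinary
addition to first order, `(r • u ⊕ r • v) / r → u + v`, and `d(u, v) = d(0, -u ⊕ v)`. Hence the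
three distances in `D(r • a, r • b)`, divided by `r`, tend to `‖a‖`, `‖b‖` and `‖b - a‖`, and
polarization identifies the limit of `D(r • a, r • b) / r²` as `⟨a, b⟩`.
-/

open Filter Topology

lemma hasDerivAt_artanh_zero : HasDerivAt _root_.artanh 1 0 := by
  have hquot : HasDerivAt (fun x : ℝ => (1 + x) / (1 - x)) 2 0 := by
    have h := ((hasDerivAt_id' (0 : ℝ)).const_add 1).div ((hasDerivAt_id' (0 : ℝ)).const_sub 1)
      (by norm_num)
    norm_num at h
    exact h
  have h := (hquot.log (by norm_num)).const_mul (1 / 2 : ℝ)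
  norm_num at h
  exact h

lemma artanh_eq_mul_dslope (x : ℝ) : _root_.artanh x = x * dslope _root_.artanh 0 x := by
  have h0 : _root_.artanh 0 = 0 := by simp [_root_.artanh]
  simpa [h0] using (sub_smul_dslope _root_.artanh 0 x).symm

lemma tendsto_dslope_artanh_zero : Tendsto (dslope _root_.artanh 0) (𝓝 0) (𝓝 1) := by
  have hcont := continuousAt_dslope_same.mpr hasDerivAt_artanh_zero.differentiableAt
  simpa [dslope_same, hasDerivAt_artanh_zero.deriv] using hcont.tendsto

lemma mobiusAdd_zero_left {n : ℕ} (c : ℝ) (v : EuclideanSpace ℝ (Fin n)) :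
    mobiusAdd c 0 v = v := by
  simp [mobiusAdd]

lemma pdist_eq_pdist_zero_mobiusAdd {n : ℕ} (c : ℝ) (u v : EuclideanSpace ℝ (Fin n)) :
    pdist c u v = pdist c 0 (mobiusAdd c (-u) v) := by
  rw [pdist, pdist, neg_zero, mobiusAdd_zero_left]

lemma pdist_zero_left_div {n : ℕ} {c : ℝ} (hc : 0 < c) (v : EuclideanSpace ℝ (Fin n))
    {r : ℝ} (hr : 0 < r) :
    pdist c 0 v / r = dslope _root_.artanh 0 (√c * ‖v‖) * ‖r⁻¹ • v‖ := by
  have hsc : √c ≠ 0 := (Real.sqrt_pos.mpr hc).ne'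
  rw [pdist, neg_zero, mobiusAdd_zero_left, artanh_eq_mul_dslope, norm_smul, norm_inv,
    Real.norm_of_nonneg hr.le]
  field_simp

lemma tendsto_pdist_zero_left_div {n : ℕ} {c : ℝ} (hc : 0 < c)
    {w : ℝ → EuclideanSpace ℝ (Fin n)} {L : EuclideanSpace ℝ (Fin n)}
    (hw : Tendsto (fun r => r⁻¹ • w r) (𝓝[>] 0) (𝓝 L)) :
    Tendsto (fun r => pdist c 0 (w r) / r) (𝓝[>] 0) (𝓝 ‖L‖) := by
  have hnorm : Tendsto (fun r => √c * ‖w r‖) (𝓝[>] 0) (𝓝 0) := by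
    have hprod : Tendsto (fun r => √c * (r * ‖r⁻¹ • w r‖)) (𝓝[>] 0) (𝓝 (√c * (0 * ‖L‖))) :=
      (tendsto_nhdsWithin_of_tendsto_nhds tendsto_id |>.mul hw.norm).const_mul _
    rw [zero_mul, mul_zero] at hprod
    refine hprod.congr' ?_
    filter_upwards [self_mem_nhdsWithin] with r (hr : 0 < r)
    rw [norm_smul, norm_inv, Real.norm_of_nonneg hr.le, mul_inv_cancel_left₀ hr.ne']
  have hlim := (tendsto_dslope_artanh_zero.comp hnorm).mul hw.norm
  rw [one_mul] at hlim
  refine hlim.congr' ?_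
  filter_upwards [self_mem_nhdsWithin] with r (hr : 0 < r)
  exact (pdist_zero_left_div hc (w r) hr).symm

lemma mobiusAdd_smul_smul {n : ℕ} (c r : ℝ) (u v : EuclideanSpace ℝ (Fin n)) :
    mobiusAdd c (r • u) (r • v) =
      r • ((1 + 2 * c * r ^ 2 * (inner ℝ u v : ℝ) + c ^ 2 * r ^ 4 * ‖u‖ ^ 2 * ‖v‖ ^ 2)⁻¹ •
        ((1 + 2 * c * r ^ 2 * (inner ℝ u v : ℝ) + c * r ^ 2 * ‖v‖ ^ 2) • u +
          (1 - c * r ^ 2 * ‖u‖ ^ 2) • v)) := by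
  simp only [mobiusAdd, real_inner_smul_left, real_inner_smul_right, norm_smul, Real.norm_eq_abs,
    mul_pow, sq_abs]
  rw [smul_comm r]
  congr 1
  · ring_nf
  · module

lemma tendsto_inv_smul_mobiusAdd_smul {n : ℕ} (c : ℝ) (u v : EuclideanSpace ℝ (Fin n)) :
    Tendsto (fun r : ℝ => r⁻¹ • mobiusAdd c (r • u) (r • v)) (𝓝[≠] 0) (𝓝 (u + v)) := by
  set M : ℝ → EuclideanSpace ℝ (Fin n) := fun r =>
    (1 + 2 * c * r ^ 2 * (inner ℝ u v : ℝ) + c ^ 2 * r ^ 4 * ‖u‖ ^ 2 * ‖v‖ ^ 2)⁻¹ •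
      ((1 + 2 * c * r ^ 2 * (inner ℝ u v : ℝ) + c * r ^ 2 * ‖v‖ ^ 2) • u +
        (1 - c * r ^ 2 * ‖u‖ ^ 2) • v) with hM
  have hMcont : ContinuousAt M 0 := by
    simp only [hM]
    fun_prop (disch := norm_num)
  have hM0 : M 0 = u + v := by simp [hM]
  rw [← hM0]
  refine (hMcont.tendsto.mono_left nhdsWithin_le_nhds).congr' ?_
  filter_upwards [self_mem_nhdsWithin] with r (hr : r ≠ 0)
  rw [mobiusAdd_smul_smul, inv_smul_smul₀ hr]

theorem phyperInner_tendsto_inner_general {n : ℕ} (c : ℝ) (hc : 0 < c)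
    (a b : EuclideanSpace ℝ (Fin n)) :
    Filter.Tendsto (fun r : ℝ => phyperInner c (r • a) (r • b) / r ^ 2)
      (nhdsWithin 0 (Set.Ioi 0)) (nhds (inner ℝ a b : ℝ)) := by
  have hscaled (x : EuclideanSpace ℝ (Fin n)) :
      Tendsto (fun r => pdist c 0 (r • x) / r) (𝓝[>] 0) (𝓝 ‖x‖) := by
    refine tendsto_pdist_zero_left_div hc (tendsto_const_nhds.congr' ?_)
    filter_upwards [self_mem_nhdsWithin] with r (hr : 0 < r)
    rw [inv_smul_smul₀ hr.ne']
  have hmobius : Tendsto (fun r => pdist c (r • a) (r • b) / r) (𝓝[>] 0) (𝓝 ‖-a + b‖) := by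
    have hpdist (r : ℝ) : pdist c (r • a) (r • b) = pdist c 0 (mobiusAdd c (r • -a) (r • b)) := by
      rw [pdist_eq_pdist_zero_mobiusAdd, smul_neg]
    simp only [hpdist]
    exact tendsto_pdist_zero_left_div hc
      ((tendsto_inv_smul_mobiusAdd_smul c (-a) b).mono_left (nhdsWithin_mono _ fun r hr => hr.ne'))
  have hlim :=
    (((hscaled a).pow 2).add ((hscaled b).pow 2)).sub (hmobius.pow 2) |>.const_mul (1 / 2)
  have hpolar : 1 / 2 * (‖a‖ ^ 2 + ‖b‖ ^ 2 - ‖-a + b‖ ^ 2) = (inner ℝ a b : ℝ) := by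
    rw [neg_add_eq_sub, norm_sub_sq_real, real_inner_comm]
    ring
  rw [hpolar] at hlim
  refine hlim.congr fun r => ?_
  rw [phyperInner]
  ring

/-- Near the origin the hyperbolic inner product agrees with the Euclidean one to
leading order: `D(r·a, r·b)/r² → ⟨a,b⟩` as `r → 0⁺` for unit vectors `a, b`. -/
theorem phyperInner_tendsto_inner {n : ℕ} (c : ℝ) (hc : 0 < c)
    (a b : EuclideanSpace ℝ (Fin n)) (ha : ‖a‖ = 1) (hb : ‖b‖ = 1) :
    Filter.Tendsto (fun r : ℝ => phyperInner c (r • a) (r • b) / r ^ 2)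
      (nhdsWithin 0 (Set.Ioi 0)) (nhds (inner ℝ a b : ℝ)) :=
  phyperInner_tendsto_inner_general c hc a b
end
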